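/- If A and E are d×d complex matrices, then |det(A+E) − det(A)| ≤ d · ‖E‖ · max{‖A‖, ‖A+E‖}^{d−1}, where ‖·‖ is the operator 2-norm. -/

import Mathlib

open Matrix

/-- The largest singular value (operator 2-norm) of a complex square matrix. -/
noncomputable def sigmaMax {n : ℕ} (A : Matrix (Fin n) (Fin n) ℂ) : ℝ :=
  ‖Matrix.toEuclideanCLM (𝕜 := ℂ) (n := Fin n) A‖

/-- The smallest singular value of a complex square matrix. -/
noncomputable def sigmaMin {n : ℕ} (A : Matrix (Fin n) (Fin n) ℂ) : ℝ :=
  ⨅ x : Metric.sphere (0 : EuclideanSpace ℂ (Fin n)) 1,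
    ‖Matrix.toEuclideanCLM (𝕜 := ℂ) (n := Fin n) A (x : EuclideanSpace ℂ (Fin n))‖

open Finset
open scoped ComplexOrder

noncomputable def colVec {d : ℕ} (M : Matrix (Fin d) (Fin d) ℂ) (j : Fin d) :
    EuclideanSpace ℂ (Fin d) := (WithLp.equiv 2 _).symm (fun i => M i j)

lemma colVec_norm_le {d : ℕ} (M : Matrix (Fin d) (Fin d) ℂ) (j : Fin d) :
    ‖colVec M j‖ ≤ sigmaMax M := by
  have h1 : colVec M j = Matrix.toEuclideanCLM (𝕜 := ℂ) M
      ((WithLp.equiv 2 _).symm (Pi.single j 1)) := by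
    rw [show (WithLp.equiv 2 (Fin d → ℂ)).symm (Pi.single j 1) = WithLp.toLp 2 (Pi.single j 1) from rfl, Matrix.toEuclideanCLM_toLp]
    unfold colVec
    congr 1
    ext i
    simp [Matrix.toLin'_apply, Matrix.mulVec_single]
  rw [h1]
  calc ‖_‖ ≤ sigmaMax M * ‖((WithLp.equiv 2 _).symm (Pi.single j 1) : EuclideanSpace ℂ (Fin d))‖ :=
        ContinuousLinearMap.le_opNorm _ _
    _ = sigmaMax M := by
        rw [show ((WithLp.equiv 2 _).symm (Pi.single j 1) : EuclideanSpace ℂ (Fin d)) = EuclideanSpace.single j 1 from rfl]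
        simp

lemma trace_eq_sum_eigs {d : ℕ} (H : Matrix (Fin d) (Fin d) ℂ) (hH : H.IsHermitian) :
    H.trace = ∑ i, (hH.eigenvalues i : ℂ) := by
  conv_lhs => rw [hH.spectral_theorem]
  rw [Unitary.conjStarAlgAut_apply, Matrix.trace_mul_cycle,
    (Matrix.mem_unitaryGroup_iff').mp (hH.eigenvectorUnitary).2, one_mul,
    Matrix.trace_diagonal]
  simp

lemma det_le_one_of_colNorm_le_one {d : ℕ} (N : Matrix (Fin d) (Fin d) ℂ)
    (h : ∀ j, ‖colVec N j‖ ≤ 1) : ‖N.det‖ ≤ 1 := by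
  have hps : (Nᴴ * N).PosSemidef := posSemidef_conjTranspose_mul_self N
  have hH := hps.isHermitian
  set lam := hH.eigenvalues with hlam
  have hnn : ∀ i, 0 ≤ lam i := hps.eigenvalues_nonneg
  have hdiag : ∀ j, (Nᴴ * N).diag j = ((‖colVec N j‖ ^ 2 : ℝ) : ℂ) := by
    intro j
    have hc : ‖colVec N j‖ ^ 2 = ∑ i, ‖N i j‖ ^ 2 := by
      rw [EuclideanSpace.norm_eq, Real.sq_sqrt (by positivity)]
      rfl
    rw [hc]
    push_cast
    simp only [Matrix.diag_apply, Matrix.mul_apply, Matrix.conjTranspose_apply]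
    refine Finset.sum_congr rfl fun i _ => ?_
    rw [show star (N i j) = (starRingEnd ℂ) (N i j) from rfl, mul_comm, Complex.mul_conj']
  have htr2 : (Nᴴ * N).trace = ((∑ j, ‖colVec N j‖ ^ 2 : ℝ) : ℂ) := by
    rw [Matrix.trace]
    push_cast
    exact Finset.sum_congr rfl fun j _ => by rw [hdiag j]; push_cast; ring
  have hsum : ∑ i, lam i ≤ (d : ℝ) := by
    have h1 : ((∑ i, lam i : ℝ) : ℂ) = ((∑ j, ‖colVec N j‖ ^ 2 : ℝ) : ℂ) := by
      rw [← htr2, trace_eq_sum_eigs _ hH]; push_cast; rfl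
    rw [Complex.ofReal_inj.mp h1]
    calc (∑ j, ‖colVec N j‖ ^ 2 : ℝ) ≤ ∑ _j : Fin d, (1:ℝ) :=
          Finset.sum_le_sum fun j _ => pow_le_one₀ (norm_nonneg _) (h j)
      _ = d := by simp
  have hdet : (‖N.det‖) ^ 2 = ∏ i, lam i := by
    have h1 : (Nᴴ * N).det = ((‖N.det‖ ^ 2 : ℝ) : ℂ) := by
      rw [Matrix.det_mul, Matrix.det_conjTranspose]
      rw [show star N.det = (starRingEnd ℂ) N.det from rfl, mul_comm, Complex.mul_conj']
      norm_cast
    have h2 : (Nᴴ * N).det = ((∏ i, lam i : ℝ) : ℂ) := by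
      rw [hH.det_eq_prod_eigenvalues]; push_cast; rfl
    exact Complex.ofReal_inj.mp (h1.symm.trans h2)
  -- AM-GM
  have hprod : ∏ i, lam i ≤ 1 := by
    rcases Nat.eq_zero_or_pos d with hd | hd
    · subst hd; simp
    have hw : ∑ _i : Fin d, (1 / d : ℝ) = 1 := by
      rw [Finset.sum_const]; simp; field_simp
    have hgm := Real.geom_mean_le_arith_mean_weighted Finset.univ
      (fun _ => (1 / d : ℝ)) lam (fun i _ => by positivity) hw (fun i _ => hnn i)
    have hrhs : ∑ i, (1 / d : ℝ) * lam i ≤ 1 := by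
      rw [← Finset.mul_sum]
      rw [div_mul_eq_mul_div, one_mul, div_le_one (by positivity)]
      exact hsum
    have hle : ∏ i, lam i ^ (1 / d : ℝ) ≤ 1 := hgm.trans hrhs
    have hre : ∏ i, lam i = (∏ i, lam i ^ (1 / d : ℝ)) ^ (d : ℕ) := by
      rw [← Finset.prod_pow]
      refine (Finset.prod_congr rfl fun i _ => ?_).symm
      rw [← Real.rpow_natCast (lam i ^ (1/d:ℝ)), ← Real.rpow_mul (hnn i)]
      rw [one_div_mul_cancel (by positivity : (d:ℝ) ≠ 0), Real.rpow_one]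
    rw [hre]
    exact pow_le_one₀ (Finset.prod_nonneg fun i _ => Real.rpow_nonneg (hnn i) _) hle
  have := hdet ▸ hprod
  nlinarith [norm_nonneg N.det]

lemma abs_det_le_prod_colNorm {d : ℕ} (M : Matrix (Fin d) (Fin d) ℂ) :
    ‖M.det‖ ≤ ∏ j, ‖colVec M j‖ := by
  by_cases hz : ∃ j, ‖colVec M j‖ = 0
  · obtain ⟨j, hj⟩ := hz
    have hcol : ∀ i, M i j = 0 := by
      have h0 : colVec M j = 0 := norm_eq_zero.mp hj
      intro i
      have := congrFun (congrArg (WithLp.equiv 2 _) h0) i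
      simpa [colVec] using this
    rw [Matrix.det_eq_zero_of_column_eq_zero j hcol]
    simpa using Finset.prod_nonneg fun j _ => norm_nonneg _
  · push_neg at hz
    have hpos : ∀ j, 0 < ‖colVec M j‖ := fun j => (norm_nonneg _).lt_of_ne' (hz j)
    set v : Fin d → ℂ := fun j => ((‖colVec M j‖⁻¹ : ℝ) : ℂ) with hv
    set N := M * Matrix.diagonal v with hN
    have hcolN : ∀ j, colVec N j = v j • colVec M j := by
      intro j
      ext i
      simp [colVec, hN, Matrix.mul_diagonal, mul_comm]
    have hNnorm : ∀ j, ‖colVec N j‖ ≤ 1 := by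
      intro j
      rw [hcolN j, norm_smul]
      simp only [hv, Complex.norm_real, Real.norm_eq_abs, abs_of_nonneg (inv_nonneg.mpr (norm_nonneg _))]
      rw [inv_mul_cancel₀ (hz j)]
    have h1 := det_le_one_of_colNorm_le_one N hNnorm
    rw [hN, Matrix.det_mul, Matrix.det_diagonal, norm_mul] at h1
    have habs : ‖∏ j, v j‖ = ∏ j, ‖colVec M j‖⁻¹ := by
      rw [norm_prod]
      exact Finset.prod_congr rfl fun j _ => by
        simp [hv, abs_of_nonneg (inv_nonneg.mpr (norm_nonneg _))]
    rw [habs] at h1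
    have hppos : (0:ℝ) < ∏ j, ‖colVec M j‖ := Finset.prod_pos fun j _ => hpos j
    rw [Finset.prod_inv_distrib] at h1
    calc ‖M.det‖ = (‖M.det‖ * (∏ j, ‖colVec M j‖)⁻¹) * ∏ j, ‖colVec M j‖ := by
          field_simp
      _ ≤ 1 * ∏ j, ‖colVec M j‖ := by
          apply mul_le_mul_of_nonneg_right h1 hppos.le
      _ = ∏ j, ‖colVec M j‖ := one_mul _

theorem abs_det_add_sub_det_le {d : ℕ} (A E : Matrix (Fin d) (Fin d) ℂ) :
    ‖(A + E).det - A.det‖ ≤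
      d * sigmaMax E * max (sigmaMax A) (sigmaMax (A + E)) ^ (d - 1) := by
  set m := max (sigmaMax A) (sigmaMax (A + E)) with hm
  have hm0 : 0 ≤ m := le_trans (norm_nonneg _) (le_max_left _ _)
  have hE0 : 0 ≤ sigmaMax E := norm_nonneg _
  set F : ℕ → Matrix (Fin d) (Fin d) ℂ :=
    fun k => Matrix.of fun i j => if (j : ℕ) < k then (A + E) i j else A i j with hF
  have hF0 : F 0 = A := by ext i j; simp [hF]
  have hFd : F d = A + E := by ext i j; simp [hF, j.isLt]
  have htel : (A + E).det - A.det = ∑ k ∈ Finset.range d, ((F (k+1)).det - (F k).det) := by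
    rw [Finset.sum_range_sub (fun k => (F k).det), hF0, hFd]
  have hbound : ∀ k ∈ Finset.range d,
      ‖(F (k+1)).det - (F k).det‖ ≤ sigmaMax E * m ^ (d - 1) := by
    intro k hk
    rw [Finset.mem_range] at hk
    set j0 : Fin d := ⟨k, hk⟩ with hj0
    set G := Matrix.updateCol (F k) j0 (fun i => E i j0) with hG
    have h1 : F (k+1) = Matrix.updateCol (F k) j0 ((fun i => A i j0) + (fun i => E i j0)) := by
      ext i j
      by_cases hj : j = j0
      · subst hj
        simp [hF, Matrix.updateCol_apply, hj0, Pi.add_apply]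
      · have hne : (j : ℕ) ≠ k := fun h => hj (Fin.ext h)
        have hiff : ((j : ℕ) < k + 1) ↔ ((j : ℕ) < k) := by omega
        simp [hF, Matrix.updateCol_apply, hj, hiff]
    have h3 : Matrix.updateCol (F k) j0 (fun i => A i j0) = F k := by
      ext i j
      by_cases hj : j = j0
      · subst hj
        simp [hF, Matrix.updateCol_apply, hj0]
      · simp [Matrix.updateCol_apply, hj]
    have hdiff : (F (k+1)).det - (F k).det = G.det := by
      rw [h1, Matrix.det_updateCol_add (F k) j0 (fun i => A i j0) (fun i => E i j0), h3]
      ring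
    rw [hdiff]
    refine le_trans (abs_det_le_prod_colNorm G) ?_
    have hcolk : ‖colVec G j0‖ ≤ sigmaMax E := by
      have : colVec G j0 = colVec E j0 := by
        ext i
        simp [colVec, hG, Matrix.updateCol_apply]
      rw [this]; exact colVec_norm_le E j0
    have hcolo : ∀ j, j ≠ j0 → ‖colVec G j‖ ≤ m := by
      intro j hj
      have : colVec G j = if (j : ℕ) < k then colVec (A + E) j else colVec A j := by
        ext i
        by_cases hlt : (j : ℕ) < k <;>
          simp [colVec, hG, Matrix.updateCol_apply, hj, hF, hlt]
      rw [this]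
      by_cases hlt : (j : ℕ) < k
      · rw [if_pos hlt]; exact le_trans (colVec_norm_le _ j) (le_max_right _ _)
      · rw [if_neg hlt]; exact le_trans (colVec_norm_le _ j) (le_max_left _ _)
    calc ∏ j, ‖colVec G j‖
        = ‖colVec G j0‖ * ∏ j ∈ Finset.univ.erase j0, ‖colVec G j‖ :=
          (Finset.mul_prod_erase _ _ (Finset.mem_univ j0)).symm
      _ ≤ sigmaMax E * m ^ (d - 1) := by
          apply mul_le_mul hcolk ?_ (Finset.prod_nonneg fun j _ => norm_nonneg _) hE0
          calc ∏ j ∈ Finset.univ.erase j0, ‖colVec G j‖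
              ≤ ∏ _j ∈ Finset.univ.erase j0, m :=
                Finset.prod_le_prod (fun j _ => norm_nonneg _)
                  (fun j hj => hcolo j (Finset.ne_of_mem_erase hj))
            _ = m ^ (d - 1) := by
                rw [Finset.prod_const, Finset.card_erase_of_mem (Finset.mem_univ j0)]
                simp
  calc ‖(A + E).det - A.det‖
      = ‖∑ k ∈ Finset.range d, ((F (k+1)).det - (F k).det)‖ := by rw [htel]
    _ ≤ ∑ k ∈ Finset.range d, ‖(F (k+1)).det - (F k).det‖ :=
        norm_sum_le _ _
    _ ≤ ∑ _k ∈ Finset.range d, sigmaMax E * m ^ (d - 1) := Finset.sum_le_sum hbound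
    _ = d * sigmaMax E * m ^ (d - 1) := by
        rw [Finset.sum_const, Finset.card_range, nsmul_eq_mul]; ring
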